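/- Suppose Q ≺ 0 and the matrix [[Q̄, S̄],[S̄ᵀ, R̄]] is invertible. If a symmetric P ∈ ℝ^{2ml×2ml}, a scalar μ ≥ 0, and matrices Λ, Ψ ∈ ℝ^{m×m} satisfy Gᵀ·diag(−P, P, Λ, Ψ)·G − μ·[[Q̃, S̃],[S̃ᵀ, R̃]] ⪯ 0, then for every (C̃', D̃') ∈ Σ the matrix Hᵀ·diag(−P, P, Λ, Ψ)·H is negative semidefinite, where H is the (4ml+2m)×(2ml+m) matrix with block rows (I_{2ml}, 0), ((Ã; C̃'), (B̃; D̃')), (0, I_m), (C̃', D̃'). -/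

import Mathlib

open Matrix

noncomputable section

/-- A real matrix is negative semidefinite: symmetric and xᵀMx ≤ 0 for all x. -/
def IsNegSemidef {k : Type*} [Fintype k] (M : Matrix k k ℝ) : Prop :=
  M.IsSymm ∧ ∀ x : k → ℝ, x ⬝ᵥ M.mulVec x ≤ 0

/-- A real matrix is positive semidefinite: symmetric and xᵀMx ≥ 0 for all x. -/
def IsPosSemidefR {k : Type*} [Fintype k] (M : Matrix k k ℝ) : Prop :=
  M.IsSymm ∧ ∀ x : k → ℝ, 0 ≤ x ⬝ᵥ M.mulVec x

/-- A real matrix is negative definite. -/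
def IsNegDef {k : Type*} [Fintype k] (M : Matrix k k ℝ) : Prop :=
  M.IsSymm ∧ ∀ x : k → ℝ, x ≠ 0 → x ⬝ᵥ M.mulVec x < 0

/-- Membership of a noise matrix V in the noise set 𝒱. -/
def inNoiseSet {r mv : ℕ} (Q : Matrix (Fin r) (Fin r) ℝ) (S : Matrix (Fin r) (Fin mv) ℝ)
    (R : Matrix (Fin mv) (Fin mv) ℝ) (V : Matrix (Fin mv) (Fin r) ℝ) : Prop :=
  IsPosSemidefR ((Matrix.fromRows Vᵀ (1 : Matrix (Fin mv) (Fin mv) ℝ))ᵀ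
    * Matrix.fromBlocks Q S Sᵀ R * Matrix.fromRows Vᵀ (1 : Matrix (Fin mv) (Fin mv) ℝ))

/-- The noise-weight matrix W = [[Q, S Bᵥᵀ], [Bᵥ Sᵀ, Bᵥ R Bᵥᵀ]]. -/
def Wmat {r m mv : ℕ} (Q : Matrix (Fin r) (Fin r) ℝ) (S : Matrix (Fin r) (Fin mv) ℝ)
    (R : Matrix (Fin mv) (Fin mv) ℝ) (Bv : Matrix (Fin m) (Fin mv) ℝ) :
    Matrix (Fin r ⊕ Fin m) (Fin r ⊕ Fin m) ℝ :=
  Matrix.fromBlocks Q (S * Bvᵀ) (Bv * Sᵀ) (Bv * R * Bvᵀ)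

/-- The data matrix M = [[(Ξ; U_Ξ), 0], [Y_Ξ, I]]. -/
def MdataF {t m r : ℕ} (Xi : Matrix (Fin t) (Fin r) ℝ) (UXi YXi : Matrix (Fin m) (Fin r) ℝ) :
    Matrix ((Fin t ⊕ Fin m) ⊕ Fin m) (Fin r ⊕ Fin m) ℝ :=
  Matrix.fromBlocks (Matrix.fromRows Xi UXi) 0 YXi 1

/-- The matrix [[Q̄, S̄], [S̄ᵀ, R̄]] = M W Mᵀ. -/
def QSRF {t m mv r : ℕ} (Xi : Matrix (Fin t) (Fin r) ℝ) (UXi YXi : Matrix (Fin m) (Fin r) ℝ)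
    (Q : Matrix (Fin r) (Fin r) ℝ) (S : Matrix (Fin r) (Fin mv) ℝ)
    (R : Matrix (Fin mv) (Fin mv) ℝ) (Bv : Matrix (Fin m) (Fin mv) ℝ) :
    Matrix ((Fin t ⊕ Fin m) ⊕ Fin m) ((Fin t ⊕ Fin m) ⊕ Fin m) ℝ :=
  MdataF Xi UXi YXi * Wmat Q S R Bv * (MdataF Xi UXi YXi)ᵀ

/-- The matrix F with block rows (I, 0), (0, I), (C̃', D̃'). -/
def Fmat {t m : ℕ} (C' : Matrix (Fin m) (Fin t) ℝ) (D' : Matrix (Fin m) (Fin m) ℝ) :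
    Matrix ((Fin t ⊕ Fin m) ⊕ Fin m) (Fin t ⊕ Fin m) ℝ :=
  Matrix.fromRows (1 : Matrix (Fin t ⊕ Fin m) (Fin t ⊕ Fin m) ℝ) (Matrix.fromCols C' D')

/-- Identification of the row index of a stacked matrix (X; Y), X with t − m rows and Y with m
rows, with Fin t: the first t − m coordinates then the last m coordinates. -/
def stackIdx {t m : ℕ} (h : m ≤ t) : (Fin (t - m) ⊕ Fin m) → Fin t :=
  Sum.elim (fun i => ⟨i.1, by have := i.2; omega⟩) (fun a => ⟨t - m + a.1, by have := a.2; omega⟩)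

/-- The matrix G with block rows (I,0,0), ((Ã;0),(B̃;0),(0;I)), (0,I,0), (0,0,I). -/
def G19 {t m : ℕ} (Atil : Matrix (Fin (t - m)) (Fin t) ℝ) (Btil : Matrix (Fin (t - m)) (Fin m) ℝ) :
    Matrix ((Fin t ⊕ (Fin (t - m) ⊕ Fin m)) ⊕ (Fin m ⊕ Fin m)) ((Fin t ⊕ Fin m) ⊕ Fin m) ℝ :=
  Matrix.fromRows
    (Matrix.fromRows
      (Matrix.fromCols (Matrix.fromCols 1 0) 0)
      (Matrix.fromRows
        (Matrix.fromCols (Matrix.fromCols Atil Btil) 0)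
        (Matrix.fromCols (Matrix.fromCols 0 0) 1)))
    (Matrix.fromRows
      (Matrix.fromCols (Matrix.fromCols 0 1) 0)
      (Matrix.fromCols (Matrix.fromCols 0 0) 1))

/-- The matrix H with block rows (I,0), ((Ã;C̃'),(B̃;D̃')), (0,I), (C̃',D̃'). -/
def H19 {t m : ℕ} (Atil : Matrix (Fin (t - m)) (Fin t) ℝ) (Btil : Matrix (Fin (t - m)) (Fin m) ℝ)
    (C' : Matrix (Fin m) (Fin t) ℝ) (D' : Matrix (Fin m) (Fin m) ℝ) :
    Matrix ((Fin t ⊕ (Fin (t - m) ⊕ Fin m)) ⊕ (Fin m ⊕ Fin m)) (Fin t ⊕ Fin m) ℝ :=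
  Matrix.fromRows
    (Matrix.fromRows
      (Matrix.fromCols 1 0)
      (Matrix.fromRows
        (Matrix.fromCols Atil Btil)
        (Matrix.fromCols C' D')))
    (Matrix.fromRows
      (Matrix.fromCols 0 1)
      (Matrix.fromCols C' D'))

/-- The block-diagonal multiplier diag(−P, P, Λ, Ψ), where the second copy of P is taken in the
coordinates of the stacked vector ((Ã; C̃')ξ + (B̃; D̃')u). -/
def Phi19 {t m : ℕ} (h : m ≤ t) (P : Matrix (Fin t) (Fin t) ℝ) (Λ Ψ : Matrix (Fin m) (Fin m) ℝ) :
    Matrix ((Fin t ⊕ (Fin (t - m) ⊕ Fin m)) ⊕ (Fin m ⊕ Fin m))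
      ((Fin t ⊕ (Fin (t - m) ⊕ Fin m)) ⊕ (Fin m ⊕ Fin m)) ℝ :=
  Matrix.fromBlocks
    (Matrix.fromBlocks (-P) 0 0 (P.submatrix (stackIdx h) (stackIdx h))) 0 0
    (Matrix.fromBlocks Λ 0 0 Ψ)

/-!
Write `T = [[Q̄, S̄], [S̄ᵀ, R̄]]`. Its leading block `Q̄ = (Ξ; U_Ξ) Q (Ξ; U_Ξ)ᵀ` is `⪯ 0`, and for
`(C̃', D̃') ∈ Σ`, substituting `Y_Ξ = [C̃' D̃'] (Ξ; U_Ξ) + B_v V` shows that `T` restricted to the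
column space of `(-[C̃' D̃']ᵀ; I)` is `B_v Π B_vᵀ ⪰ 0`, with `Π` the matrix of the noise set.
These two subspaces have complementary dimensions, so by Sylvester's law of inertia they are
maximal `T`-nonpositive and `T`-nonnegative subspaces. Dually, every vector orthogonal to the second
one, in particular every vector of the graph `F = (I; [C̃' D̃'])`, is `T⁻¹`-nonpositive.
Since `H = G F`, we get `Hᵀ Φ H = Fᵀ (Gᵀ Φ G - μ T⁻¹) F + μ Fᵀ T⁻¹ F ⪯ 0`.
-/

theorem dotProduct_transpose_mul_mul_mulVec {n p : Type*} [Fintype n] [Fintype p]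
    (B : Matrix p n ℝ) (M : Matrix p p ℝ) (x : n → ℝ) :
    x ⬝ᵥ (Bᵀ * M * B) *ᵥ x = (B *ᵥ x) ⬝ᵥ M *ᵥ (B *ᵥ x) := by
  rw [← mulVec_mulVec, ← mulVec_mulVec, dotProduct_mulVec, vecMul_transpose]

section Inertia

variable {n : Type*} [Fintype n]

theorem finrank_le_card_nonpos_of_sum_mul_sq_nonpos {c : (n → ℝ) →ₗ[ℝ] n → ℝ}
    (hc : Function.Injective c) (e : n → ℝ) {E : Submodule ℝ (n → ℝ)}
    (hE : ∀ x ∈ E, ∑ i, e i * c x i ^ 2 ≤ 0) :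
    Module.finrank ℝ E ≤ Fintype.card {i // e i ≤ 0} := by
  let restrict : E →ₗ[ℝ] {i // e i ≤ 0} → ℝ :=
    LinearMap.funLeft ℝ ℝ Subtype.val ∘ₗ c ∘ₗ E.subtype
  have hinj : Function.Injective restrict := by
    rw [← LinearMap.ker_eq_bot, Submodule.eq_bot_iff]
    intro x hx
    have hzero : ∀ i, e i ≤ 0 → c x i = 0 := fun i hi => congrFun hx ⟨i, hi⟩
    have hterm : ∀ i, 0 ≤ e i * c x i ^ 2 := by
      intro i
      rcases le_or_gt (e i) 0 with hi | hi
      · simp [hzero i hi]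
      · positivity
    have hsum := (Finset.sum_eq_zero_iff_of_nonneg fun i _ => hterm i).mp
      (le_antisymm (hE x x.2) (Finset.sum_nonneg fun i _ => hterm i))
    have hcx : c x = 0 := by
      funext i
      rcases le_or_gt (e i) 0 with hi | hi
      · exact hzero i hi
      · simpa [hi.ne'] using hsum i (Finset.mem_univ i)
    exact Subtype.ext (hc (by simpa using hcx))
  simpa using LinearMap.finrank_le_finrank_of_injective hinj

variable [DecidableEq n] {T : Matrix n n ℝ}

theorem Matrix.IsSymm.exists_dotProduct_mulVec_eq_sum_mul_sq (hT : T.IsSymm)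
    (hdet : IsUnit T.det) :
    ∃ (c : (n → ℝ) →ₗ[ℝ] n → ℝ) (e : n → ℝ), Function.Injective c ∧ (∀ i, e i ≠ 0) ∧
      ∀ x, x ⬝ᵥ T *ᵥ x = ∑ i, e i * c x i ^ 2 := by
  have hH : T.IsHermitian := isHermitian_iff_isSymm.mpr hT
  set U : Matrix n n ℝ := (hH.eigenvectorUnitary : Matrix n n ℝ)
  have hU : IsUnit Uᵀ := (isUnit_transpose U).mpr Unitary.isUnit_coe
  refine ⟨mulVecLin Uᵀ, hH.eigenvalues, mulVec_injective_iff_isUnit.mpr hU, fun i hi => ?_,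
    fun x => ?_⟩
  · have hprod := hH.det_eq_prod_eigenvalues
    simp [Finset.prod_eq_zero (Finset.mem_univ i) hi] at hprod
    exact hdet.ne_zero hprod
  · have hspec : T = Uᵀᵀ * diagonal hH.eigenvalues * Uᵀ := by
      conv_lhs => rw [hH.spectral_theorem]
      simp [U, star_eq_conjTranspose]
    conv_lhs => rw [hspec]
    rw [dotProduct_transpose_mul_mul_mulVec, mulVecLin_apply]
    simp only [dotProduct, mulVec_diagonal]
    congr 1
    ext i
    ring

theorem Matrix.IsSymm.finrank_add_finrank_le_card (hT : T.IsSymm) (hdet : IsUnit T.det)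
    {E W : Submodule ℝ (n → ℝ)} (hE : ∀ x ∈ E, x ⬝ᵥ T *ᵥ x ≤ 0)
    (hW : ∀ x ∈ W, 0 ≤ x ⬝ᵥ T *ᵥ x) :
    Module.finrank ℝ E + Module.finrank ℝ W ≤ Fintype.card n := by
  obtain ⟨c, e, hc, he, hq⟩ := hT.exists_dotProduct_mulVec_eq_sum_mul_sq hdet
  have hE' := finrank_le_card_nonpos_of_sum_mul_sq_nonpos hc e fun x hx => hq x ▸ hE x hx
  have hW' := finrank_le_card_nonpos_of_sum_mul_sq_nonpos hc (fun i => -e i) fun x hx => by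
    simpa [neg_mul, ← hq] using hW x hx
  have hneg : Fintype.card {i // -e i ≤ 0} ≤ Fintype.card {i // ¬ e i ≤ 0} :=
    Fintype.card_subtype_mono _ _ fun i hi =>
      not_le.mpr (lt_of_le_of_ne (neg_nonpos.mp hi) (he i).symm)
  have := Fintype.card_subtype_le fun i => e i ≤ 0
  rw [Fintype.card_subtype_compl] at hneg
  omega

theorem Matrix.IsSymm.dotProduct_inv_mulVec_nonpos (hT : T.IsSymm) (hdet : IsUnit T.det)
    {E V : Submodule ℝ (n → ℝ)}
    (hdim : Fintype.card n ≤ Module.finrank ℝ E + Module.finrank ℝ V)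
    (hE : ∀ x ∈ E, x ⬝ᵥ T *ᵥ x ≤ 0) (hV : ∀ x ∈ V, 0 ≤ x ⬝ᵥ T *ᵥ x) {u : n → ℝ}
    (hu : ∀ x ∈ V, u ⬝ᵥ x = 0) : u ⬝ᵥ T⁻¹ *ᵥ u ≤ 0 := by
  by_contra! hpos
  set w := T⁻¹ *ᵥ u
  have hTw : T *ᵥ w = u := by rw [mulVec_mulVec, mul_nonsing_inv T hdet, one_mulVec]
  have hwV : w ∉ V := fun h => hpos.ne' (hu w h)
  -- `w` is `T`-orthogonal to `V` and `T`-positive, so adjoining it keeps `T` nonnegative.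
  have hVw : ∀ x ∈ V ⊔ Submodule.span ℝ {w}, 0 ≤ x ⬝ᵥ T *ᵥ x := by
    intro x hx
    obtain ⟨v, hv, _, hy, rfl⟩ := Submodule.mem_sup.mp hx
    obtain ⟨a, rfl⟩ := Submodule.mem_span_singleton.mp hy
    have hvw : v ⬝ᵥ T *ᵥ w = 0 := by rw [hTw, dotProduct_comm]; exact hu v hv
    have hwv : w ⬝ᵥ T *ᵥ v = 0 := by
      rw [dotProduct_mulVec, ← mulVec_transpose, hT.eq, hTw]; exact hu v hv
    have hww : w ⬝ᵥ T *ᵥ w = u ⬝ᵥ w := by rw [hTw, dotProduct_comm]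
    simp only [mulVec_add, mulVec_smul, dotProduct_add, add_dotProduct, dotProduct_smul,
      smul_dotProduct, smul_eq_mul, hvw, hwv, hww]
    nlinarith [hV v hv, mul_self_nonneg a]
  have := hT.finrank_add_finrank_le_card hdet hE hVw
  rw [Submodule.finrank_sup_span_singleton hwV] at this
  omega

end Inertia

theorem Matrix.IsSymm.transpose_mul_mul {k p : Type*} [Fintype k] {M : Matrix k k ℝ}
    (hM : M.IsSymm) (B : Matrix k p ℝ) : (Bᵀ * M * B).IsSymm := by
  rw [IsSymm, transpose_mul, transpose_mul, transpose_transpose, hM.eq, Matrix.mul_assoc]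

section Semidef

variable {k p : Type*} [Fintype k] [Fintype p] {M N : Matrix k k ℝ}

theorem IsNegSemidef.transpose_mul_mul (hM : IsNegSemidef M) (B : Matrix k p ℝ) :
    IsNegSemidef (Bᵀ * M * B) :=
  ⟨hM.1.transpose_mul_mul B, fun x => by
    rw [dotProduct_transpose_mul_mul_mulVec]; exact hM.2 _⟩

theorem IsPosSemidefR.mul_mul_transpose (hM : IsPosSemidefR M) (B : Matrix p k ℝ) :
    IsPosSemidefR (B * M * Bᵀ) := by
  refine ⟨by simpa using hM.1.transpose_mul_mul Bᵀ, fun x => ?_⟩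
  have := hM.2 (Bᵀ *ᵥ x)
  rwa [← dotProduct_transpose_mul_mul_mulVec, transpose_transpose] at this

theorem IsNegDef.isNegSemidef (hM : IsNegDef M) : IsNegSemidef M := by
  refine ⟨hM.1, fun x => ?_⟩
  rcases eq_or_ne x 0 with rfl | hx
  · simp
  · exact (hM.2 x hx).le

theorem IsNegSemidef.add (hM : IsNegSemidef M) (hN : IsNegSemidef N) :
    IsNegSemidef (M + N) :=
  ⟨hM.1.add hN.1, fun x => by
    rw [add_mulVec, dotProduct_add]; exact add_nonpos (hM.2 x) (hN.2 x)⟩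

theorem IsNegSemidef.smul (hM : IsNegSemidef M) {c : ℝ} (hc : 0 ≤ c) :
    IsNegSemidef (c • M) :=
  ⟨hM.1.smul c, fun x => by
    rw [smul_mulVec, dotProduct_smul, smul_eq_mul]
    exact mul_nonpos_of_nonneg_of_nonpos hc (hM.2 x)⟩

theorem IsNegSemidef.transpose_mul_mul_of_sub_smul {a : Type*} [Fintype a] {G : Matrix a k ℝ}
    {Φ : Matrix a a ℝ} {μ : ℝ} (hLMI : IsNegSemidef (Gᵀ * Φ * G - μ • M)) (hμ : 0 ≤ μ)
    {F : Matrix k p ℝ} (hM : IsNegSemidef (Fᵀ * M * F)) :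
    IsNegSemidef ((G * F)ᵀ * Φ * (G * F)) := by
  have hsplit : (G * F)ᵀ * Φ * (G * F) = Fᵀ * (Gᵀ * Φ * G - μ • M) * F + μ • (Fᵀ * M * F) := by
    simp [transpose_mul, Matrix.mul_sub, Matrix.sub_mul, Matrix.mul_assoc]
  rw [hsplit]
  exact (hLMI.transpose_mul_mul F).add (hM.smul hμ)

end Semidef

theorem Matrix.rank_eq_card_of_mul_eq_one {m k : Type*} [Fintype m] [Fintype k] [DecidableEq k]
    {A : Matrix m k ℝ} {B : Matrix k m ℝ} (h : B * A = 1) : A.rank = Fintype.card k :=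
  le_antisymm A.rank_le_card_width (by simpa [h] using rank_mul_le_right B A)

section Graph

variable {p q : Type*} [Fintype p] [Fintype q] [DecidableEq q]

theorem Matrix.transpose_fromRows_one_zero_mul_mul (T : Matrix (q ⊕ p) (q ⊕ p) ℝ) :
    (fromRows (1 : Matrix q q ℝ) (0 : Matrix p q ℝ))ᵀ * T *
        fromRows (1 : Matrix q q ℝ) (0 : Matrix p q ℝ) = T.toBlocks₁₁ := by
  conv_lhs => rw [← fromBlocks_toBlocks T]
  simp [transpose_fromRows, fromCols_mul_fromBlocks, fromCols_mul_fromRows]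

variable [DecidableEq p]

theorem Matrix.IsSymm.isNegSemidef_transpose_fromRows_one_mul_inv_mul
    {T : Matrix (q ⊕ p) (q ⊕ p) ℝ} (hT : T.IsSymm) (hdet : IsUnit T.det) (K : Matrix p q ℝ)
    (hE : IsNegSemidef T.toBlocks₁₁)
    (hV : IsPosSemidefR ((fromRows (-Kᵀ) (1 : Matrix p p ℝ))ᵀ * T *
      fromRows (-Kᵀ) (1 : Matrix p p ℝ))) :
    IsNegSemidef ((fromRows (1 : Matrix q q ℝ) K)ᵀ * T⁻¹ * fromRows (1 : Matrix q q ℝ) K) := by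
  have hTinv : T⁻¹.IsSymm := by rw [IsSymm, transpose_nonsing_inv, hT.eq]
  refine ⟨hTinv.transpose_mul_mul _, fun y => ?_⟩
  rw [dotProduct_transpose_mul_mul_mulVec]
  have hdim : Fintype.card (q ⊕ p) ≤ (fromRows (1 : Matrix q q ℝ) (0 : Matrix p q ℝ)).rank +
      (fromRows (-Kᵀ) (1 : Matrix p p ℝ)).rank := by
    rw [rank_eq_card_of_mul_eq_one (B := fromCols 1 0) (by simp [fromCols_mul_fromRows]),
      rank_eq_card_of_mul_eq_one (B := fromCols 0 1) (by simp [fromCols_mul_fromRows]),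
      Fintype.card_sum]
  refine hT.dotProduct_inv_mulVec_nonpos hdet hdim ?_ ?_ ?_
  · rintro _ ⟨z, rfl⟩
    rw [mulVecLin_apply, ← dotProduct_transpose_mul_mul_mulVec,
      transpose_fromRows_one_zero_mul_mul]
    exact hE.2 z
  · rintro _ ⟨v, rfl⟩
    rw [mulVecLin_apply, ← dotProduct_transpose_mul_mul_mulVec]
    exact hV.2 v
  · rintro _ ⟨v, rfl⟩
    have horth : (fromRows (1 : Matrix q q ℝ) K)ᵀ * fromRows (-Kᵀ) (1 : Matrix p p ℝ) = 0 := by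
      simp [transpose_fromRows, fromCols_mul_fromRows]
    rw [mulVecLin_apply, dotProduct_mulVec, ← vecMul_transpose, vecMul_vecMul, horth,
      vecMul_zero, zero_dotProduct]

end Graph

section Data

variable {t m mv r : ℕ} (Xi : Matrix (Fin t) (Fin r) ℝ) (UXi YXi : Matrix (Fin m) (Fin r) ℝ)
  (Q : Matrix (Fin r) (Fin r) ℝ) (S : Matrix (Fin r) (Fin mv) ℝ) (R : Matrix (Fin mv) (Fin mv) ℝ)
  (Bv : Matrix (Fin m) (Fin mv) ℝ)

theorem QSRF_isSymm (hQ : Q.IsSymm) (hR : R.IsSymm) : (QSRF Xi UXi YXi Q S R Bv).IsSymm := by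
  have hW : (Wmat Q S R Bv).IsSymm := by
    rw [IsSymm, Wmat, fromBlocks_transpose]
    simp [transpose_mul, hQ.eq, hR.eq, Matrix.mul_assoc]
  simpa [QSRF] using hW.transpose_mul_mul (MdataF Xi UXi YXi)ᵀ

theorem QSRF_toBlocks₁₁ :
    (QSRF Xi UXi YXi Q S R Bv).toBlocks₁₁ = fromRows Xi UXi * Q * (fromRows Xi UXi)ᵀ := by
  simp [QSRF, MdataF, Wmat, fromBlocks_transpose, fromBlocks_multiply]

theorem transpose_mul_QSRF_mul_fromRows_neg_transpose {V : Matrix (Fin mv) (Fin r) ℝ}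
    {K : Matrix (Fin m) (Fin t ⊕ Fin m) ℝ} (hY : YXi = K * fromRows Xi UXi + Bv * V) :
    (fromRows (-Kᵀ) (1 : Matrix (Fin m) (Fin m) ℝ))ᵀ * QSRF Xi UXi YXi Q S R Bv *
        fromRows (-Kᵀ) (1 : Matrix (Fin m) (Fin m) ℝ) =
      Bv * ((fromRows Vᵀ (1 : Matrix (Fin mv) (Fin mv) ℝ))ᵀ * fromBlocks Q S Sᵀ R *
        fromRows Vᵀ (1 : Matrix (Fin mv) (Fin mv) ℝ)) * Bvᵀ := by
  have hM : (MdataF Xi UXi YXi)ᵀ * fromRows (-Kᵀ) (1 : Matrix (Fin m) (Fin m) ℝ) =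
      fromRows (Vᵀ * Bvᵀ) 1 := by
    simp [MdataF, fromBlocks_transpose, transpose_fromRows, hY, transpose_add, transpose_mul,
      fromBlocks_mul_fromRows]
  calc _ = ((MdataF Xi UXi YXi)ᵀ * fromRows (-Kᵀ) (1 : Matrix (Fin m) (Fin m) ℝ))ᵀ *
        Wmat Q S R Bv * ((MdataF Xi UXi YXi)ᵀ * fromRows (-Kᵀ) (1 : Matrix (Fin m) (Fin m) ℝ)) := by
        simp only [QSRF, transpose_mul, transpose_transpose, Matrix.mul_assoc]
    _ = _ := by
      rw [hM]
      simp [Wmat, transpose_fromRows, fromCols_mul_fromBlocks, fromCols_mul_fromRows,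
        Matrix.mul_add, Matrix.add_mul, Matrix.mul_assoc]

end Data

theorem H19_eq_G19_mul_Fmat {t m : ℕ} (Atil : Matrix (Fin (t - m)) (Fin t) ℝ)
    (Btil : Matrix (Fin (t - m)) (Fin m) ℝ) (C' : Matrix (Fin m) (Fin t) ℝ)
    (D' : Matrix (Fin m) (Fin m) ℝ) : H19 Atil Btil C' D' = G19 Atil Btil * Fmat C' D' := by
  simp only [H19, G19, Fmat, fromRows_mul, fromCols_mul_fromRows, Matrix.mul_one,
    Matrix.zero_mul, Matrix.one_mul, fromCols_zero, add_zero, zero_add]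

/-- If the robust LMI Gᵀ·diag(−P,P,Λ,Ψ)·G − μ·[[Q̃,S̃],[S̃ᵀ,R̃]] ⪯ 0 holds for
some symmetric P and μ ≥ 0, then for every (C̃', D̃') ∈ Σ the matrix Hᵀ·diag(−P,P,Λ,Ψ)·H is
negative semidefinite. -/
theorem stmt19 {N l m mv : ℕ} (hl : 1 ≤ l)
    (Xi : Matrix (Fin (2 * m * l)) (Fin (N - l)) ℝ)
    (UXi YXi : Matrix (Fin m) (Fin (N - l)) ℝ)
    (Bv : Matrix (Fin m) (Fin mv) ℝ)
    (Q : Matrix (Fin (N - l)) (Fin (N - l)) ℝ) (S : Matrix (Fin (N - l)) (Fin mv) ℝ)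
    (R : Matrix (Fin mv) (Fin mv) ℝ) (hQ : IsNegDef Q) (hR : R.IsSymm)
    (Atil : Matrix (Fin (2 * m * l - m)) (Fin (2 * m * l)) ℝ)
    (Btil : Matrix (Fin (2 * m * l - m)) (Fin m) ℝ)
    (hinv : IsUnit (QSRF Xi UXi YXi Q S R Bv).det)
    (P : Matrix (Fin (2 * m * l)) (Fin (2 * m * l)) ℝ)
    (μ : ℝ) (hμ : 0 ≤ μ)
    (Λ Ψ : Matrix (Fin m) (Fin m) ℝ)
    (hLMI : IsNegSemidef
      ((G19 Atil Btil)ᵀ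
          * Phi19 (by have := Nat.mul_le_mul (le_refl (2 * m)) hl; omega : m ≤ 2 * m * l) P Λ Ψ
          * G19 Atil Btil
        - μ • (QSRF Xi UXi YXi Q S R Bv)⁻¹)) :
    ∀ (C' : Matrix (Fin m) (Fin (2 * m * l)) ℝ) (D' : Matrix (Fin m) (Fin m) ℝ),
      (∃ V : Matrix (Fin mv) (Fin (N - l)) ℝ, inNoiseSet Q S R V ∧
        YXi = C' * Xi + D' * UXi + Bv * V) →
      IsNegSemidef
        ((H19 Atil Btil C' D')ᵀ
          * Phi19 (by have := Nat.mul_le_mul (le_refl (2 * m)) hl; omega : m ≤ 2 * m * l) P Λ Ψ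
          * H19 Atil Btil C' D') := by
  rintro C' D' ⟨V, hV, hY⟩
  have hY' : YXi = fromCols C' D' * fromRows Xi UXi + Bv * V := by
    rw [hY, fromCols_mul_fromRows]
  have hT := QSRF_isSymm Xi UXi YXi Q S R Bv hQ.1 hR
  rw [H19_eq_G19_mul_Fmat]
  refine hLMI.transpose_mul_mul_of_sub_smul hμ
    (hT.isNegSemidef_transpose_fromRows_one_mul_inv_mul hinv _ ?_ ?_)
  · rw [QSRF_toBlocks₁₁]
    simpa using hQ.isNegSemidef.transpose_mul_mul (fromRows Xi UXi)ᵀ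
  · rw [transpose_mul_QSRF_mul_fromRows_neg_transpose Xi UXi YXi Q S R Bv hY']
    exact hV.mul_mul_transpose Bv
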